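/- arXiv:2502.13336 — 6 statements merged into one kernel-verified Lean document; each statement's English description precedes it below -/
import Mathlib

section
/- In a metric space, suppose q, p_k, p*, u, p' are points with D(p', u) ≤ D(p_k, u)/(2α), D(p*, u) ≤ D(p_k, u)/(2α), and D(p_k, u) ≤ D(p_k, p*), where α > 0. Then D(p', q) ≤ D(p_k, q)/α + D(p*, q)·(1 + 1/α). -/
/-- Distance chain bound from the colorful search analysis. -/
theorem update_distance_bound {X : Type*} [MetricSpace X] (α : ℝ) (hα : 0 < α)
    (q pk pstar u p' : X)
    (h1 : dist p' u ≤ dist pk u / (2 * α))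
    (h2 : dist pstar u ≤ dist pk u / (2 * α))
    (h3 : dist pk u ≤ dist pk pstar) :
    dist p' q ≤ dist pk q / α + dist pstar q * (1 + 1 / α) := by
  have t1 : dist p' q ≤ dist p' u + dist u pstar + dist pstar q := dist_triangle4 _ _ _ _
  have t2 : dist pk pstar ≤ dist pk q + dist q pstar := dist_triangle _ _ _
  have e1 : dist u pstar = dist pstar u := dist_comm _ _
  have e2 : dist q pstar = dist pstar q := dist_comm _ _
  have hα' : (0:ℝ) < 2 * α := by linarith
  rw [le_div_iff₀ hα'] at h1 h2
  rw [div_add' _ _ _ (ne_of_gt hα), le_div_iff₀ hα, mul_add, mul_one]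
  have : (1/α) * α = 1 := by field_simp
  nlinarith [dist_nonneg (x := pstar) (y := q)]
end

section
/- Greedy anti-cover property of the Gonzales algorithm: let R = {v_1, ..., v_m} be the set produced by iteratively choosing from a finite set B the point maximizing its minimum ρ-distance to the points already chosen (starting from an arbitrary first point). Then for any p ∈ B \ R, min_{v ∈ R} ρ(p, v) ≤ min over distinct pairs v_1, v_2 ∈ R of ρ(v_1, v_2). -/
/-- Anti-cover property of Gonzales' greedy algorithm: if `v 0, ..., v (m-1)` are
chosen greedily from `B` (each `v i` maximizes the minimum distance to the
previously chosen points), then any `p ∈ B` not among the chosen points has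
`min_{i} ρ(p, v i) ≤ min_{j ≠ l} ρ(v j, v l)`. -/
theorem gonzales_anti_cover {X : Type*} [PseudoMetricSpace X] (B : Finset X)
    (m : ℕ) (hm : 2 ≤ m) (v : Fin m → X) (hvB : ∀ i, v i ∈ B)
    (hgreedy : ∀ i : Fin m, 0 < i.val → ∀ p ∈ B, ∃ j : Fin m, j.val < i.val ∧
      ∀ j' : Fin m, j'.val < i.val → dist p (v j) ≤ dist (v i) (v j'))
    (p : X) (hp : p ∈ B) (hpR : ∀ i, p ≠ v i) :
    ∃ i : Fin m, ∀ j l : Fin m, j ≠ l → dist p (v i) ≤ dist (v j) (v l) := by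
  -- the finite set of distinct pairs
  classical
  set S : Finset (Fin m × Fin m) :=
    (Finset.univ ×ˢ Finset.univ).filter (fun q => q.1 ≠ q.2) with hS
  have hSne : S.Nonempty := by
    refine ⟨(⟨0, by omega⟩, ⟨1, by omega⟩), ?_⟩
    simp [hS, Fin.ext_iff]
  obtain ⟨q, hqS, hqmin⟩ := S.exists_min_image (fun q => dist (v q.1) (v q.2)) hSne
  have hqne : q.1 ≠ q.2 := by
    simpa [hS] using hqS
  -- WLOG the larger index first
  obtain ⟨a, b, hba, hmin⟩ :
      ∃ a b : Fin m, b.val < a.val ∧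
        ∀ j l : Fin m, j ≠ l → dist (v a) (v b) ≤ dist (v j) (v l) := by
    rcases lt_or_gt_of_ne (fun h : q.1.val = q.2.val => hqne (Fin.ext h)) with h | h
    · exact ⟨q.2, q.1, h, fun j l hjl => by
        rw [dist_comm]
        exact hqmin (j, l) (by simp [hS, hjl])⟩
    · exact ⟨q.1, q.2, h, fun j l hjl => hqmin (j, l) (by simp [hS, hjl])⟩
  obtain ⟨i, hi, hile⟩ := hgreedy a (by omega) p hp
  exact ⟨i, fun j l hjl => (hile b hba).trans (hmin j l hjl)⟩
end

section
/- Let ρ be a pseudometric, C > 0, k' a positive integer, and P a finite set admitting a (k', C)-diverse subset OPT of size k. Consider the following process: while some ball B_ρ(p, C/4) with p ∈ P contains more than k' points of P, add exactly k' points of B_ρ(p, C/4) ∩ P to SOL and delete B_ρ(p, C/2) ∩ P from P; at termination add all remaining points of P to SOL. Then |SOL| ≥ k. -/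
open Classical in
/-- Initialization algorithm size guarantee: if `P0` admits a `(k',C)`-diverse
subset `OPT` of size `k`, then the greedy ball-removal process produces a set
`SOL` of size at least `k`. -/
theorem initialization_size {X : Type*} [PseudoMetricSpace X] (C : ℝ) (hC : 0 < C)
    (k k' : ℕ) (hk' : 0 < k')
    (P0 OPT : Finset X) (hOPTsub : OPT ⊆ P0) (hOPTcard : OPT.card = k)
    (hOPTdiv : ∀ p ∈ OPT, (OPT.filter (fun u => u ∈ Metric.ball p C)).card ≤ k')
    (n : ℕ) (P : ℕ → Finset X) (p : ℕ → X) (A : ℕ → Finset X)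
    (hP0 : P 0 = P0)
    (hctr : ∀ i < n, p i ∈ P i ∧
      k' < ((P i).filter (fun u => u ∈ Metric.ball (p i) (C / 4))).card)
    (hA : ∀ i < n, A i ⊆ (P i).filter (fun u => u ∈ Metric.ball (p i) (C / 4)) ∧
      (A i).card = k')
    (hstep : ∀ i < n, P (i + 1) = (P i).filter (fun u => u ∉ Metric.ball (p i) (C / 2)))
    (hterm : ∀ x ∈ P n, ((P n).filter (fun u => u ∈ Metric.ball x (C / 4))).card ≤ k') :
    k ≤ ((Finset.range n).biUnion A ∪ P n).card := by
  -- successive P's are decreasing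
  have hsub : ∀ i < n, P (i + 1) ⊆ P i := by
    intro i hi
    rw [hstep i hi]
    exact Finset.filter_subset _ _
  have hmono : ∀ i j, i ≤ j → j ≤ n → P j ⊆ P i := by
    intro i j hij hjn
    induction j with
    | zero =>
        have : i = 0 := by omega
        subst this; exact subset_rfl
    | succ m ih =>
        rcases Nat.lt_or_ge i (m + 1) with h | h
        · exact (hsub m (by omega)).trans (ih (by omega) (by omega))
        · have : i = m + 1 := by omega
          subst this; exact subset_rfl
  -- elements of A i are removed at step i
  have hAdel : ∀ i < n, ∀ x ∈ A i, x ∉ P (i + 1) := by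
    intro i hi x hx
    rw [hstep i hi, Finset.mem_filter]
    have hx' := (hA i hi).1 hx
    rw [Finset.mem_filter, Metric.mem_ball] at hx'
    simp only [Metric.mem_ball, not_and, not_not]
    intro _
    linarith [hx'.2]
  -- A i are pairwise disjoint
  have hApair : ∀ i ∈ Finset.range n, ∀ j ∈ Finset.range n, i ≠ j →
      Disjoint (A i) (A j) := by
    have key : ∀ i j, i < j → j < n → Disjoint (A i) (A j) := by
      intro i j hij hjn
      rw [Finset.disjoint_left]
      intro x hxi hxj
      have hxPj : x ∈ P j := Finset.mem_filter.mp ((hA j hjn).1 hxj) |>.1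
      have : x ∈ P (i + 1) := hmono (i + 1) j (by omega) (by omega) hxPj
      exact hAdel i (by omega) x hxi this
    intro i hi j hj hij
    simp only [Finset.mem_range] at hi hj
    rcases Nat.lt_or_ge i j with h | h
    · exact key i j h hj
    · exact (key j i (by omega) hi).symm
  -- A i disjoint from P n
  have hAPn : Disjoint ((Finset.range n).biUnion A) (P n) := by
    rw [Finset.disjoint_left]
    intro x hx hxPn
    obtain ⟨i, hi, hxi⟩ := Finset.mem_biUnion.mp hx
    simp only [Finset.mem_range] at hi
    exact hAdel i hi x hxi (hmono (i + 1) n (by omega) le_rfl hxPn)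
  -- card of SOL
  have hcardSOL : ((Finset.range n).biUnion A ∪ P n).card = n * k' + (P n).card := by
    rw [Finset.card_union_of_disjoint hAPn, Finset.card_biUnion hApair]
    congr 1
    rw [Finset.sum_congr rfl (fun i hi => (hA i (Finset.mem_range.mp hi)).2)]
    simp [mul_comm]
  -- key lemma: at most k' OPT points are removed at each step
  have hkey : ∀ j < n, (OPT ∩ (P j \ P (j + 1))).card ≤ k' := by
    intro j hjn
    rcases (OPT ∩ (P j \ P (j + 1))).eq_empty_or_nonempty with he | ⟨q, hq⟩
    · rw [he]; simp
    · have hball : ∀ x ∈ OPT ∩ (P j \ P (j + 1)), dist x (p j) < C / 2 := by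
        intro x hx
        rw [Finset.mem_inter, Finset.mem_sdiff] at hx
        have hx2 := hx.2.2
        rw [hstep j hjn, Finset.mem_filter] at hx2
        simp only [not_and, not_not, Metric.mem_ball] at hx2
        exact hx2 hx.2.1
      have hqOPT : q ∈ OPT := (Finset.mem_inter.mp hq).1
      have hsubf : OPT ∩ (P j \ P (j + 1)) ⊆
          OPT.filter (fun u => u ∈ Metric.ball q C) := by
        intro x hx
        rw [Finset.mem_filter, Metric.mem_ball]
        refine ⟨(Finset.mem_inter.mp hx).1, ?_⟩
        calc dist x q ≤ dist x (p j) + dist (p j) q := dist_triangle _ _ _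
          _ < C / 2 + C / 2 := by
              have := hball x hx
              have := hball q hq
              rw [dist_comm (p j) q]; linarith
          _ = C := by ring
      exact le_trans (Finset.card_le_card hsubf) (hOPTdiv q hqOPT)
  -- downward induction
  have haux : ∀ d j, j + d = n → (OPT ∩ P j).card ≤ d * k' + (OPT ∩ P n).card := by
    intro d
    induction d with
    | zero => intro j hj; have : j = n := by omega
              subst this; simp
    | succ m ih =>
        intro j hj
        have hjn : j < n := by omega
        have hsplit : OPT ∩ P j ⊆ (OPT ∩ (P j \ P (j + 1))) ∪ (OPT ∩ P (j + 1)) := by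
          intro x hx
          rw [Finset.mem_inter] at hx
          rw [Finset.mem_union, Finset.mem_inter, Finset.mem_inter, Finset.mem_sdiff]
          by_cases h : x ∈ P (j + 1)
          · exact Or.inr ⟨hx.1, h⟩
          · exact Or.inl ⟨hx.1, hx.2, h⟩
        calc (OPT ∩ P j).card
            ≤ ((OPT ∩ (P j \ P (j + 1))) ∪ (OPT ∩ P (j + 1))).card :=
              Finset.card_le_card hsplit
          _ ≤ (OPT ∩ (P j \ P (j + 1))).card + (OPT ∩ P (j + 1)).card :=
              Finset.card_union_le _ _
          _ ≤ k' + (m * k' + (OPT ∩ P n).card) := by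
              have := hkey j hjn
              have := ih (j + 1) (by omega)
              omega
          _ = (m + 1) * k' + (OPT ∩ P n).card := by ring
  have h0 : OPT ∩ P 0 = OPT := by
    rw [hP0]
    exact Finset.inter_eq_left.mpr hOPTsub
  have := haux n 0 (by omega)
  rw [h0, hOPTcard] at this
  have hPn : (OPT ∩ P n).card ≤ (P n).card :=
    Finset.card_le_card (Finset.inter_subset_right)
  omega
end

section
/- The set SOL produced by the initialization algorithm is (k', C/4)-diverse: during the process, whenever k' points from a ball B_ρ(p, C/4) are added to SOL and all points of B_ρ(p, C/2) are removed, no future point added to SOL lies within ρ-distance C/4 of any of those k' points; and the final remaining points each have at most k' points of P within distance C/4. Hence every point of SOL has at most k' points of SOL within ρ-distance C/4. -/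
open Classical in
/-- The set `SOL` produced by the initialization algorithm is `(k',C/4)`-diverse:
every point of `SOL` has at most `k'` points of `SOL` within distance `C/4`. -/
theorem initialization_diverse {X : Type*} [PseudoMetricSpace X] (C : ℝ) (hC : 0 < C)
    (k' : ℕ) (hk' : 0 < k') (P0 : Finset X)
    (n : ℕ) (P : ℕ → Finset X) (p : ℕ → X) (A : ℕ → Finset X)
    (hP0 : P 0 = P0)
    (hctr : ∀ i < n, p i ∈ P i ∧
      k' < ((P i).filter (fun u => u ∈ Metric.ball (p i) (C / 4))).card)
    (hA : ∀ i < n, A i ⊆ (P i).filter (fun u => u ∈ Metric.ball (p i) (C / 4)) ∧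
      (A i).card = k')
    (hstep : ∀ i < n, P (i + 1) = (P i).filter (fun u => u ∉ Metric.ball (p i) (C / 2)))
    (hterm : ∀ x ∈ P n, ((P n).filter (fun u => u ∈ Metric.ball x (C / 4))).card ≤ k') :
    ∀ x ∈ (Finset.range n).biUnion A ∪ P n,
      (((Finset.range n).biUnion A ∪ P n).filter
        (fun u => u ∈ Metric.ball x (C / 4))).card ≤ k' := by
  have hmono : ∀ j ≤ n, ∀ i ≤ j, P j ⊆ P i := by
    intro j hj
    induction j with
    | zero => intro i hi; interval_cases i; exact subset_rfl
    | succ m ih =>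
      intro i hi
      have hsub : P (m + 1) ⊆ P m := by
        rw [hstep m (by omega)]; exact Finset.filter_subset _ _
      rcases Nat.lt_or_ge i (m + 1) with h | h
      · exact hsub.trans (ih (by omega) i (by omega))
      · have : i = m + 1 := by omega
        subst this; exact subset_rfl
  have hsep : ∀ i < n, ∀ a ∈ Metric.ball (p i) (C / 4), ∀ y ∈ P (i + 1),
      C / 4 < dist a y := by
    intro i hi a ha y hy
    rw [hstep i hi, Finset.mem_filter] at hy
    have h1 : dist a (p i) < C / 4 := Metric.mem_ball.mp ha
    have h2 : C / 2 ≤ dist y (p i) := by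
      by_contra h
      exact hy.2 (Metric.mem_ball.mpr (by linarith))
    have ht : dist y (p i) ≤ dist y a + dist a (p i) := dist_triangle y a (p i)
    have hc : dist a y = dist y a := dist_comm a y
    linarith
  intro x hx
  rcases Finset.mem_union.mp hx with hx | hx
  · obtain ⟨i, hi, hxA⟩ := Finset.mem_biUnion.mp hx
    rw [Finset.mem_range] at hi
    have hxP : x ∈ P i ∧ x ∈ Metric.ball (p i) (C / 4) :=
      Finset.mem_filter.mp ((hA i hi).1 hxA)
    have hsubset : (((Finset.range n).biUnion A ∪ P n).filter
        (fun u => u ∈ Metric.ball x (C / 4))) ⊆ A i := by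
      intro u hu
      obtain ⟨hu1, hu2⟩ := Finset.mem_filter.mp hu
      have hd : dist u x < C / 4 := Metric.mem_ball.mp hu2
      rcases Finset.mem_union.mp hu1 with hu1 | hu1
      · obtain ⟨j, hj, huA⟩ := Finset.mem_biUnion.mp hu1
        rw [Finset.mem_range] at hj
        have huP : u ∈ P j ∧ u ∈ Metric.ball (p j) (C / 4) :=
          Finset.mem_filter.mp ((hA j hj).1 huA)
        rcases lt_trichotomy i j with h | h | h
        · -- u ∈ P j ⊆ P (i+1), x ∈ ball (p i) (C/4)
          have : u ∈ P (i + 1) := hmono j (le_of_lt hj) (i + 1) (by omega) huP.1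
          have := hsep i hi x hxP.2 u this
          rw [dist_comm u x] at hd; linarith
        · subst h; exact huA
        · have : x ∈ P (j + 1) := hmono i (le_of_lt hi) (j + 1) (by omega) hxP.1
          have := hsep j hj u huP.2 x this
          linarith
      · have : u ∈ P (i + 1) := hmono n le_rfl (i + 1) (by omega) hu1
        have := hsep i hi x hxP.2 u this
        rw [dist_comm u x] at hd; linarith
    calc (((Finset.range n).biUnion A ∪ P n).filter
        (fun u => u ∈ Metric.ball x (C / 4))).card ≤ (A i).card :=
          Finset.card_le_card hsubset
      _ = k' := (hA i hi).2
  · have hsubset : (((Finset.range n).biUnion A ∪ P n).filter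
        (fun u => u ∈ Metric.ball x (C / 4))) ⊆
        (P n).filter (fun u => u ∈ Metric.ball x (C / 4)) := by
      intro u hu
      obtain ⟨hu1, hu2⟩ := Finset.mem_filter.mp hu
      have hd : dist u x < C / 4 := Metric.mem_ball.mp hu2
      rcases Finset.mem_union.mp hu1 with hu1 | hu1
      · obtain ⟨j, hj, huA⟩ := Finset.mem_biUnion.mp hu1
        rw [Finset.mem_range] at hj
        have huP : u ∈ P j ∧ u ∈ Metric.ball (p j) (C / 4) :=
          Finset.mem_filter.mp ((hA j hj).1 huA)
        have : x ∈ P (j + 1) := hmono n le_rfl (j + 1) (by omega) hx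
        have := hsep j hj u huP.2 x this
        linarith
      · exact Finset.mem_filter.mpr ⟨hu1, hu2⟩
    exact le_trans (Finset.card_le_card hsubset) (hterm x hx)
end

section
/- Disjoint-ball partition lemma: let ρ be a pseudometric and OPT, ALG finite sets with |OPT| = |ALG| = k and p_k ∈ ALG \ OPT, where OPT is (k', C)-diverse. Then there exists a point p* ∈ OPT \ ALG such that |B_ρ(p*, C/2) ∩ (ALG \ {p_k})| < k'. -/
open Classical in
lemma diverse_aux {X : Type*} [PseudoMetricSpace X]
    (C : ℝ) (hC : 0 < C) (k' : ℕ) (OPT A' : Finset X)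
    (hdiv : ∀ p ∈ OPT, (OPT.filter (fun u => u ∈ Metric.ball p C)).card ≤ k') :
    ∀ T : Finset X, T ⊆ OPT → (∀ p ∈ T, p ∉ A') →
      (∀ p ∈ T, k' ≤ (A'.filter (fun u => u ∈ Metric.ball p (C/2))).card) →
      T.card ≤ ((A' \ OPT).filter (fun u => ∃ p ∈ T, u ∈ Metric.ball p (C/2))).card := by
  intro T
  induction T using Finset.strongInduction with
  | _ T ih =>
    intro hTO hTA hball
    rcases T.eq_empty_or_nonempty with rfl | ⟨p, hp⟩
    · simp
    set T₁ := T.filter (fun q => q ∈ Metric.ball p C) with hT₁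
    set T₂ := T \ T₁ with hT₂
    have hpT₁ : p ∈ T₁ := by
      simp [hT₁, hp, Metric.mem_ball, dist_self, hC]
    have hT₁sub : T₁ ⊆ T := Finset.filter_subset _ _
    have hT₂ss : T₂ ⊂ T := by
      refine ⟨Finset.sdiff_subset, fun h => ?_⟩
      have := h (hT₁sub hpT₁)
      simp [hT₂, hpT₁] at this
    have hIH := ih T₂ hT₂ss (fun q hq => hTO (Finset.sdiff_subset hq))
      (fun q hq => hTA q (Finset.sdiff_subset hq))
      (fun q hq => hball q (Finset.sdiff_subset hq))
    -- the half-ball around p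
    set Bhalf := A'.filter (fun u => u ∈ Metric.ball p (C/2)) with hBhalf
    set Bin := Bhalf.filter (fun u => u ∈ OPT) with hBin
    set Bout := Bhalf.filter (fun u => u ∉ OPT) with hBout
    have hsplit : Bin.card + Bout.card = Bhalf.card :=
      Finset.card_filter_add_card_filter_not _
    have hk' : k' ≤ Bhalf.card := hball p hp
    -- Bin ∪ T₁ fits inside the diversity ball
    have hunion : Bin ∪ T₁ ⊆ OPT.filter (fun u => u ∈ Metric.ball p C) := by
      intro u hu
      rcases Finset.mem_union.1 hu with hu | hu
      · simp only [hBin, hBhalf, Finset.mem_filter] at hu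
        refine Finset.mem_filter.2 ⟨hu.2, ?_⟩
        have := hu.1.2
        rw [Metric.mem_ball] at this ⊢
        linarith
      · simp only [hT₁, Finset.mem_filter] at hu
        exact Finset.mem_filter.2 ⟨hTO hu.1, hu.2⟩
    have hdisj : Disjoint Bin T₁ := by
      rw [Finset.disjoint_right]
      intro u hu hu'
      have huA : u ∈ A' := by
        simp only [hBin, hBhalf, Finset.mem_filter] at hu'
        exact hu'.1.1
      exact hTA u (hT₁sub hu) huA
    have hcard1 : Bin.card + T₁.card ≤ k' := by
      have := Finset.card_le_card hunion
      rw [Finset.card_union_of_disjoint hdisj] at this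
      exact this.trans (hdiv p (hTO hp))
    have hT₁Bout : T₁.card ≤ Bout.card := by omega
    -- Bout and the IH set are disjoint and both inside the target set
    set F := fun (S : Finset X) =>
      (A' \ OPT).filter (fun u => ∃ q ∈ S, u ∈ Metric.ball q (C/2)) with hF
    have hBoutF : Bout ⊆ F T := by
      intro u hu
      simp only [hBout, hBhalf, Finset.mem_filter] at hu
      simp only [hF, Finset.mem_filter, Finset.mem_sdiff]
      exact ⟨⟨hu.1.1, hu.2⟩, p, hp, hu.1.2⟩
    have hFTsub : F T₂ ⊆ F T := by
      intro u hu
      simp only [hF, Finset.mem_filter] at hu ⊢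
      obtain ⟨h1, q, hq, h2⟩ := hu
      exact ⟨h1, q, Finset.sdiff_subset hq, h2⟩
    have hdisj2 : Disjoint Bout (F T₂) := by
      rw [Finset.disjoint_left]
      intro u hu hu'
      simp only [hBout, hBhalf, Finset.mem_filter, Metric.mem_ball] at hu
      simp only [hF, Finset.mem_filter, Metric.mem_ball] at hu'
      obtain ⟨-, q, hq, hdq⟩ := hu'
      have hqT₁ : q ∈ T₁:= by
        simp only [hT₁, Finset.mem_filter, Metric.mem_ball]
        refine ⟨(Finset.sdiff_subset hq), ?_⟩
        calc dist q p ≤ dist q u + dist u p := dist_triangle _ _ _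
          _ = dist u q + dist u p := by rw [dist_comm q u]
          _ < C/2 + C/2 := by exact add_lt_add hdq hu.1.2
          _ = C := by ring
      exact (Finset.mem_sdiff.1 hq).2 hqT₁
    have hcardT : T₂.card + T₁.card = T.card :=
      Finset.card_sdiff_add_card_eq_card hT₁sub
    have hIH2 : T₂.card ≤ (F T₂).card := hIH
    have : T₂.card + T₁.card ≤ (F T₂).card + Bout.card :=
      Nat.add_le_add hIH2 hT₁Bout
    have hunion2 : (F T₂).card + Bout.card ≤ (F T).card := by
      have := Finset.card_le_card (Finset.union_subset hFTsub hBoutF)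
      rwa [Finset.card_union_of_disjoint hdisj2.symm] at this
    show T.card ≤ (F T).card
    omega

open Classical in
/-- If `OPT` is `(k',C)`-diverse, `|OPT| = |ALG| = k` and `pk ∈ ALG \ OPT`,
then some `p* ∈ OPT \ ALG` satisfies `|B_ρ(p*, C/2) ∩ (ALG \ {pk})| < k'`. -/
theorem diverse_replacement_exists {X : Type*} [PseudoMetricSpace X]
    (C : ℝ) (hC : 0 < C) (k k' : ℕ)
    (OPT ALG : Finset X) (hOPT : OPT.card = k) (hALG : ALG.card = k)
    (pk : X) (hpkA : pk ∈ ALG) (hpkO : pk ∉ OPT)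
    (hdiv : ∀ p ∈ OPT, (OPT.filter (fun u => u ∈ Metric.ball p C)).card ≤ k') :
    ∃ p ∈ OPT, p ∉ ALG ∧
      ((ALG.erase pk).filter (fun u => u ∈ Metric.ball p (C / 2))).card < k' := by
  by_contra h
  push_neg at h
  set A' := ALG.erase pk with hA'
  set T := OPT \ ALG with hT
  have h1 : ∀ p ∈ T, p ∉ A' := fun p hp hpa =>
    (Finset.mem_sdiff.1 hp).2 (Finset.mem_of_mem_erase hpa)
  have h2 : ∀ p ∈ T, k' ≤ (A'.filter (fun u => u ∈ Metric.ball p (C/2))).card :=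
    fun p hp => h p (Finset.mem_sdiff.1 hp).1 (Finset.mem_sdiff.1 hp).2
  have key := diverse_aux C hC k' OPT A' hdiv T Finset.sdiff_subset h1 h2
  have hle : ((A' \ OPT).filter
      (fun u => ∃ p ∈ T, u ∈ Metric.ball p (C/2))).card ≤ (A' \ OPT).card :=
    Finset.card_filter_le _ _
  have e2 : A' \ OPT = (ALG \ OPT).erase pk := Finset.erase_sdiff_comm ALG OPT pk
  have hpkAO : pk ∈ ALG \ OPT := Finset.mem_sdiff.2 ⟨hpkA, hpkO⟩
  have e3 : (A' \ OPT).card = (ALG \ OPT).card - 1 := by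
    rw [e2, Finset.card_erase_of_mem hpkAO]
  have e1 : T.card = (ALG \ OPT).card := Finset.card_sdiff_comm (hOPT.trans hALG.symm)
  have hpos : 0 < (ALG \ OPT).card := Finset.card_pos.2 ⟨pk, hpkAO⟩
  omega
end

section
/- Final distance bound in the colorful search analysis: suppose a process runs for T steps updating one of k values; whenever value i is updated its new value satisfies a'_i ≤ a_i/α + B(1+1/α) with α > 1, B ≥ 0, and each step updates the value currently of maximum magnitude. Then after T steps the maximum value is at most max_i a⁰_i / α^{⌊T/k⌋} + ((α+1)/(α−1))·B, where a⁰_i are the initial values. -/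
/-- Final distance bound in the colorful search analysis: over `T` steps, each
updating the currently maximal one of `k` nonnegative values with contraction
`a' ≤ a/α + B(1+1/α)` (others not increasing), the final values are all at most
`max_i a⁰_i / α^⌊T/k⌋ + ((α+1)/(α-1)) B`. -/
theorem search_final_bound (α B : ℝ) (hα : 1 < α) (hB : 0 ≤ B)
    (k T : ℕ) (hk : 0 < k)
    (a : ℕ → Fin k → ℝ) (ha : ∀ t j, 0 ≤ a t j)
    (σ : ℕ → Fin k)
    (hmax : ∀ t < T, ∀ j, a t j ≤ a t (σ t))
    (hupd : ∀ t < T, a (t + 1) (σ t) ≤ a t (σ t) / α + B * (1 + 1 / α))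
    (hoth : ∀ t < T, ∀ j, j ≠ σ t → a (t + 1) j ≤ a t j) :
    ∀ j, a T j ≤
      (Finset.univ.sup' ⟨⟨0, hk⟩, Finset.mem_univ _⟩ (fun i => a 0 i)) / α ^ (T / k)
        + ((α + 1) / (α - 1)) * B := by
  have hα0 : (0:ℝ) < α := by linarith
  have hα1 : (0:ℝ) < α - 1 := by linarith
  set c : ℝ := ((α + 1) / (α - 1)) * B with hc_def
  have hc : 0 ≤ c := by positivity
  have hne0 : α ≠ 0 := ne_of_gt hα0
  have hne1 : α - 1 ≠ 0 := ne_of_gt hα1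
  have hfix : c / α + B * (1 + 1 / α) = c := by
    rw [hc_def]
    field_simp
    ring
  set b : ℕ → Fin k → ℝ := fun t j => max (a t j - c) 0 with hb_def
  have hb0 : ∀ t j, 0 ≤ b t j := fun t j => le_max_right _ _
  have ne : (Finset.univ : Finset (Fin k)).Nonempty := ⟨⟨0, hk⟩, Finset.mem_univ _⟩
  set m : ℕ → ℝ := fun t => Finset.univ.sup' ne (b t) with hm_def
  have hm0 : ∀ t, 0 ≤ m t := fun t => le_trans (hb0 t ⟨0, hk⟩) (Finset.le_sup' _ (Finset.mem_univ _))
  have hble : ∀ t j, b t j ≤ m t := fun t j => Finset.le_sup' _ (Finset.mem_univ _)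
  -- updated index contracts
  have hbu : ∀ t < T, b (t + 1) (σ t) ≤ b t (σ t) / α := by
    intro t ht
    apply max_le
    · have hkey : a t (σ t) / α + B * (1 + 1 / α) - c = (a t (σ t) - c) / α := by
        nth_rewrite 1 [← hfix]
        ring
      have h1 : a (t + 1) (σ t) - c ≤ (a t (σ t) - c) / α := by
        have h2 := hupd t ht
        linarith [hkey]
      calc a (t + 1) (σ t) - c ≤ (a t (σ t) - c) / α := h1
        _ ≤ b t (σ t) / α := by gcongr; exact le_max_left _ _
    · positivity
  -- every index nonincreasing each step
  have hstep : ∀ t < T, ∀ j, b (t + 1) j ≤ b t j := by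
    intro t ht j
    by_cases hj : j = σ t
    · rw [hj]
      calc b (t + 1) (σ t) ≤ b t (σ t) / α := hbu t ht
        _ ≤ b t (σ t) := by
            rw [div_le_iff₀ hα0]
            nlinarith [hb0 t (σ t)]
    · apply max_le
      · exact le_trans (sub_le_sub_right (hoth t ht j hj) c) (le_max_left _ _)
      · exact le_max_right _ _
  -- monotone over intervals
  have hdec : ∀ s t, s ≤ t → t ≤ T → ∀ j, b t j ≤ b s j := by
    intro s t hst
    induction t, hst using Nat.le_induction with
    | base => intro _ _; exact le_rfl
    | succ n hn ih =>
      intro htT j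
      exact le_trans (hstep n (by omega) j) (ih (by omega) j)
  -- b respects the max selection
  have hbmax : ∀ t < T, ∀ j, b t j ≤ b t (σ t) := by
    intro t ht j
    exact max_le (le_trans (sub_le_sub_right (hmax t ht j) c) (le_max_left _ _)) (le_max_right _ _)
  -- block contraction
  have hblock : ∀ t, t + k ≤ T → ∀ j, b (t + k) j ≤ m t / α := by
    intro t htk j
    have key : ∀ s, t ≤ s → s < t + k → b (t + k) (σ s) ≤ m t / α := by
      intro s hs1 hs2
      have hsT : s < T := by omega
      calc b (t + k) (σ s) ≤ b (s + 1) (σ s) := hdec (s + 1) (t + k) (by omega) htk _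
        _ ≤ b s (σ s) / α := hbu s hsT
        _ ≤ m t / α := by
            gcongr
            exact le_trans (hdec t s hs1 (by omega) _) (hble t _)
    by_cases hsurj : ∃ i : Fin k, σ (t + ↑i) = j
    · obtain ⟨i, hi⟩ := hsurj
      rw [← hi]
      exact key (t + ↑i) (by omega) (by have := i.isLt; omega)
    · -- f not surjective hence not injective: two equal updates
      have hninj : ¬ Function.Injective (fun i : Fin k => σ (t + ↑i)) := by
        intro hinj
        exact hsurj ((Finite.injective_iff_surjective.mp hinj) j)
      rw [Function.not_injective_iff] at hninj
      obtain ⟨i1, i2, heq, hne⟩ := hninj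
      -- wlog i1 < i2
      have main : ∀ i1 i2 : Fin k, i1 < i2 → σ (t + ↑i1) = σ (t + ↑i2) →
          b (t + k) j ≤ m t / α := by
        intro i1 i2 hlt heq
        have h2T : t + ↑i2 < T := by have := i2.isLt; omega
        calc b (t + k) j ≤ b (t + ↑i2) j := hdec _ _ (by have := i2.isLt; omega) htk _
          _ ≤ b (t + ↑i2) (σ (t + ↑i2)) := hbmax _ h2T j
          _ = b (t + ↑i2) (σ (t + ↑i1)) := by rw [heq]
          _ ≤ b (t + ↑i1 + 1) (σ (t + ↑i1)) := by
              apply hdec _ _ ?_ (by omega)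
              have : (i1 : ℕ) < (i2 : ℕ) := hlt
              omega
          _ ≤ b (t + ↑i1) (σ (t + ↑i1)) / α := hbu _ (by have := i1.isLt; omega)
          _ ≤ m t / α := by
              gcongr
              exact le_trans (hdec t _ (by omega) (by have := i1.isLt; omega) _) (hble t _)
      rcases lt_or_gt_of_ne hne with h | h
      · exact main i1 i2 h heq
      · exact main i2 i1 h heq.symm
  -- iterate blocks
  have hiter : ∀ r : ℕ, r * k ≤ T → m (r * k) ≤ m 0 / α ^ r := by
    intro r
    induction r with
    | zero => intro _; simp
    | succ n ih =>
      intro hr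
      have hnk : n * k ≤ T := by nlinarith
      have h1 : m ((n + 1) * k) ≤ m (n * k) / α := by
        apply Finset.sup'_le
        intro j _
        have : (n + 1) * k = n * k + k := by ring
        rw [this]
        exact hblock (n * k) (by omega) j
      calc m ((n + 1) * k) ≤ m (n * k) / α := h1
        _ ≤ (m 0 / α ^ n) / α := by gcongr; exact ih hnk
        _ = m 0 / α ^ (n + 1) := by rw [div_div, pow_succ]
  -- put it together
  intro j
  set M : ℝ := Finset.univ.sup' ⟨⟨0, hk⟩, Finset.mem_univ _⟩ (fun i => a 0 i) with hM_def
  have hMnn : 0 ≤ M := le_trans (ha 0 ⟨0, hk⟩) (Finset.le_sup' _ (Finset.mem_univ _))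
  have hm0M : m 0 ≤ M := by
    apply Finset.sup'_le
    intro i _
    exact max_le (le_trans (by linarith [hc] : a 0 i - c ≤ a 0 i)
      (Finset.le_sup' _ (Finset.mem_univ _))) hMnn
  have hq : (T / k) * k ≤ T := Nat.div_mul_le_self T k
  have hbT : b T j ≤ M / α ^ (T / k) := by
    calc b T j ≤ b ((T / k) * k) j := hdec _ _ hq le_rfl j
      _ ≤ m ((T / k) * k) := hble _ _
      _ ≤ m 0 / α ^ (T / k) := hiter _ hq
      _ ≤ M / α ^ (T / k) := by gcongr
  have : a T j - c ≤ b T j := le_max_left _ _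
  linarith
end
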